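/- For every 3SAT formula φ on n boolean variables (n even, n ≥ 4), the graph G(φ) is (n/2 + 1)-laminar if and only if φ is satisfiable. That is, G(φ) has a diametral path μ such that every vertex of G(φ) is at distance at most n/2 + 1 from μ if and only if there is a truth assignment of x₁,…,x_n making every clause of φ true. -/

import Mathlib

/-
The diameter of `G(φ)` is `3n - 1`, and only the ends `V₁`, `V_{2n}` of the two pending chains
are that far apart, since every vertex lies close to the ladder of literal vertices. Two
1-Lipschitz lower bounds for the distance from `V₁` and to `V_{2n}` add up to exactly `3n - 1` on
chain and literal vertices and to more on the clause gadgets, so a diametral path runs along the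
first chain, through exactly one literal vertex of each level and along the second chain; the
literal vertices it visits form a truth assignment. Such a path comes within `n/2 + 1` of a clause
vertex only at one of the clause's literals, so it is `(n/2 + 1)`-dominating iff the assignment
satisfies `φ`.
-/

open SimpleGraph

/-- Vertices of the graph `G(φ)` associated with a 3SAT formula `φ` with `m` clauses over `n`
boolean variables (`n` even):
* `lit i b` is the literal vertex `X_{i+1}` (if `b = true`) or `X̄_{i+1}` (if `b = false`);
* `chain k` is the vertex `V_{k+1}` of the two pending chains `V₁ — ⋯ — V_n` and
  `V_{n+1} — ⋯ — V_{2n}`;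
* `clause j` is the vertex of the clause `C_{j+1}`;
* `inner j t s` is the `(s+1)`-st internal vertex of the path of length `n/2 + 1` (with `n/2`
  internal vertices) joining the clause vertex `C_{j+1}` to the vertex of its `(t+1)`-st
  literal. -/
inductive Vert (n m : ℕ) : Type
  | lit : Fin n → Bool → Vert n m
  | chain : Fin (2 * n) → Vert n m
  | clause : Fin m → Vert n m
  | inner : Fin m → Fin 3 → Fin (n / 2) → Vert n m
  deriving DecidableEq

/-- The base (asymmetric) adjacency relation of `G(φ)`, where the 3SAT formula `φ` assigns to
each clause index `j` and each slot `t ∈ {0,1,2}` a literal `φ j t = (i, b)` (variable index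
`i`, polarity `b`):
* `X_i` and `X̄_i` are adjacent, and every vertex of `{X_i, X̄_i}` is adjacent to every vertex
  of `{X_{i+1}, X̄_{i+1}}`;
* `V₁ — ⋯ — V_n` and `V_{n+1} — ⋯ — V_{2n}` are paths, `V_n` is moreover adjacent to both
  `X₁, X̄₁` and `V_{n+1}` to both `X_n, X̄_n`;
* each clause vertex `C_j` is joined to the vertex of each of its literals by a path of length
  `n/2 + 1` whose `n/2` internal vertices are the `inner j t s`. -/
def satRel (n m : ℕ) (φ : Fin m → Fin 3 → Fin n × Bool) : Vert n m → Vert n m → Prop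
  | .lit i b, .lit i' b' => (i = i' ∧ b ≠ b') ∨ (i : ℕ) + 1 = (i' : ℕ)
  | .chain k, .chain k' => (k : ℕ) + 1 = (k' : ℕ) ∧ (k' : ℕ) ≠ n
  | .chain k, .lit i _ => ((k : ℕ) = n - 1 ∧ (i : ℕ) = 0) ∨ ((k : ℕ) = n ∧ (i : ℕ) = n - 1)
  | .clause j, .inner j' _ s => j = j' ∧ (s : ℕ) = 0
  | .inner j t s, .inner j' t' s' => j = j' ∧ t = t' ∧ (s : ℕ) + 1 = (s' : ℕ)
  | .inner j t s, .lit i b => (s : ℕ) = n / 2 - 1 ∧ φ j t = (i, b)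
  | _, _ => False

/-- The graph `G(φ)` associated with a 3SAT formula `φ`. -/
def Gphi (n m : ℕ) (φ : Fin m → Fin 3 → Fin n × Bool) : SimpleGraph (Vert n m) :=
  SimpleGraph.fromRel (satRel n m φ)

/-- A walk `p` is a diametral path: a shortest path between two vertices at distance `diam G`. -/
def IsDiametralPath {V : Type*} (G : SimpleGraph V) {u v : V} (p : G.Walk u v) : Prop :=
  p.length = G.dist u v ∧ G.dist u v = G.diam

/-- A walk `p` is `k`-dominating: every vertex of `G` is at distance at most `k`
from some vertex of `p`. -/
def IsKDominating {V : Type*} (G : SimpleGraph V) (k : ℕ) {u v : V} (p : G.Walk u v) : Prop :=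
  ∀ x : V, ∃ y ∈ p.support, G.dist x y ≤ k

/-- `G` is `k`-laminar: it has a `k`-dominating diametral path. -/
def KLaminar {V : Type*} (G : SimpleGraph V) (k : ℕ) : Prop :=
  ∃ (u v : V) (p : G.Walk u v), IsDiametralPath G p ∧ IsKDominating G k p

namespace SimpleGraph

variable {V : Type*} {G : SimpleGraph V} {u v w : V}

theorem edist_le_add_of_le {a b : ℕ} (huv : G.edist u v ≤ a) (hvw : G.edist v w ≤ b) :
    G.edist u w ≤ (a + b : ℕ) := by
  push_cast
  exact G.edist_triangle.trans (add_le_add huv hvw)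

theorem dist_le_of_edist_le {a : ℕ} (h : G.edist u v ≤ a) : G.dist u v ≤ a :=
  ENat.toNat_le_of_le_natCast h

theorem exists_walk_of_adj_seq (F : ℕ → V) (L : ℕ) (hF : ∀ i < L, G.Adj (F i) (F (i + 1))) :
    ∃ p : G.Walk (F 0) (F L), p.length = L ∧ ∀ k ≤ L, F k ∈ p.support := by
  induction L with
  | zero => exact ⟨.nil, rfl, fun k hk => by simp [Nat.le_zero.mp hk]⟩
  | succ L ih =>
    obtain ⟨p, hlen, hsupp⟩ := ih fun i hi => hF i (by omega)
    refine ⟨p.concat (hF L (by omega)), by simp [hlen], fun k hk => ?_⟩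
    rw [Walk.support_concat, List.mem_append]
    rcases Nat.lt_or_ge k (L + 1) with hk' | hk'
    · exact Or.inl (hsupp k (by omega))
    · simp [show k = L + 1 by omega]

theorem edist_le_of_adj_seq (F : ℕ → V) {a b : ℕ} (hab : a ≤ b)
    (hF : ∀ i, a ≤ i → i < b → G.Adj (F i) (F (i + 1))) :
    G.edist (F a) (F b) ≤ (b - a : ℕ) := by
  obtain ⟨p, hlen, -⟩ := exists_walk_of_adj_seq (G := G) (fun k => F (a + k)) (b - a)
    fun i hi => hF (a + i) (by omega) (by omega)
  simpa [Nat.add_sub_cancel' hab, hlen] using p.edist_le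

variable {P : V → ℕ}

theorem Walk.le_add_length (hP : ∀ x y, G.Adj x y → P y ≤ P x + 1) (p : G.Walk u v) :
    P v ≤ P u + p.length := by
  induction p with
  | nil => simp
  | cons h _ ih => have := hP _ _ h; simp only [Walk.length_cons]; omega

theorem Reachable.le_add_dist (hP : ∀ x y, G.Adj x y → P y ≤ P x + 1) (h : G.Reachable u v) :
    P v ≤ P u + G.dist u v := by
  obtain ⟨p, hp⟩ := h.exists_walk_length_eq_dist
  exact hp ▸ p.le_add_length hP

theorem Walk.le_add_idxOf_support [DecidableEq V] (hP : ∀ x y, G.Adj x y → P y ≤ P x + 1)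
    (p : G.Walk u v) (hw : w ∈ p.support) : P w ≤ P u + p.support.idxOf w :=
  p.length_takeUntil hw ▸ (p.takeUntil w hw).le_add_length hP

theorem Walk.le_add_length_sub_idxOf_support [DecidableEq V]
    (hP : ∀ x y, G.Adj x y → P y ≤ P x + 1) (p : G.Walk u v) (hw : w ∈ p.support) :
    P w ≤ P v + (p.length - p.support.idxOf w) := by
  have := (p.dropUntil w hw).reverse.le_add_length hP
  rwa [Walk.length_reverse, p.length_dropUntil hw] at this

end SimpleGraph

namespace Gphi

variable {n m : ℕ} {φ : Fin m → Fin 3 → Fin n × Bool}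

theorem adj_of_satRel {u v : Vert n m} (hne : u ≠ v) (h : satRel n m φ u v) :
    (Gphi n m φ).Adj u v :=
  (fromRel_adj _ _ _).2 ⟨hne, Or.inl h⟩

theorem lipschitz_of_satRel {P : Vert n m → ℕ}
    (hP : ∀ x y, satRel n m φ x y → P y ≤ P x + 1 ∧ P x ≤ P y + 1) :
    ∀ x y, (Gphi n m φ).Adj x y → P y ≤ P x + 1 := by
  intro x y hxy
  obtain ⟨-, h | h⟩ := (fromRel_adj _ _ _).1 hxy
  exacts [(hP x y h).1, (hP y x h).2]

theorem edist_lit_le (i i' : Fin n) (b b' : Bool) :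
    (Gphi n m φ).edist (.lit i b) (.lit i' b') ≤ (max ((i : ℕ) - i' + (i' - i)) 1 : ℕ) := by
  wlog hii' : (i : ℕ) ≤ i' generalizing i i' b b'
  · rw [edist_comm, add_comm]
    exact this i' i b' b (by omega)
  rcases hii'.eq_or_lt with hii' | hii'
  · obtain rfl : i = i' := Fin.ext hii'
    calc (Gphi n m φ).edist (.lit i b) (.lit i b') ≤ 1 := by
          rw [edist_le_one_iff_adj_or_eq]
          by_cases hb : b = b'
          · exact Or.inr (hb ▸ rfl)
          · exact Or.inl (adj_of_satRel (by simp [hb]) (Or.inl ⟨rfl, hb⟩))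
      _ ≤ _ := by simp
  · let F : ℕ → Vert n m := fun k => .lit ⟨min k i', by omega⟩ (if k < i' then b else b')
    have h := edist_le_of_adj_seq (G := Gphi n m φ) F hii'.le fun k hik hki' =>
      adj_of_satRel (by simp [F, Fin.ext_iff]; omega) (Or.inr (by simp; omega))
    simp only [F, min_eq_left hii'.le, if_pos hii', min_self, lt_irrefl, if_false] at h
    exact h.trans (by norm_cast; omega)

theorem edist_chain_lit_le_of_lt {k : Fin (2 * n)} (hk : (k : ℕ) < n) (b : Bool) :
    (Gphi n m φ).edist (.chain k) (.lit ⟨0, by omega⟩ b) ≤ (n - k : ℕ) := by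
  let F : ℕ → Vert n m := fun x =>
    if h : x < n then .chain ⟨x, by omega⟩ else .lit ⟨0, by omega⟩ b
  have h := edist_le_of_adj_seq (G := Gphi n m φ) F hk.le fun x hkx hxn => by
    by_cases hx : x + 1 < n
    · simp only [F, dif_pos hxn, dif_pos hx]
      exact adj_of_satRel (by simp) ⟨rfl, by simp; omega⟩
    · simp only [F, dif_pos hxn, dif_neg hx]
      exact adj_of_satRel (by simp) (Or.inl ⟨by simp; omega, rfl⟩)
  simpa [F, hk] using h

theorem edist_chain_lit_le_of_le {k : Fin (2 * n)} (hk : n ≤ (k : ℕ)) (b : Bool) :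
    (Gphi n m φ).edist (.chain k) (.lit ⟨n - 1, by omega⟩ b) ≤ (k + 1 - n : ℕ) := by
  let F : ℕ → Vert n m := fun x =>
    if h : x < n then .lit ⟨n - 1, by omega⟩ b else .chain ⟨min x k, by omega⟩
  have h := edist_le_of_adj_seq (G := Gphi n m φ) F (a := n - 1) (b := k) (by omega)
    fun x hx hxk => by
      by_cases hxn : x < n
      · simp only [F, dif_pos hxn, dif_neg (show ¬ x + 1 < n by omega)]
        rw [SimpleGraph.adj_comm]
        exact adj_of_satRel (by simp) (Or.inr ⟨by simp; omega, rfl⟩)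
      · simp only [F, dif_neg hxn, dif_neg (show ¬ x + 1 < n by omega)]
        exact adj_of_satRel (by simp; omega) ⟨by simp; omega, by simp; omega⟩
  rw [SimpleGraph.edist_comm]
  simpa [F, show n - 1 < n by omega, show ¬ (k : ℕ) < n by omega,
    show k + 1 - n = k - (n - 1) by omega] using h

theorem edist_inner_lit_le (j : Fin m) (t : Fin 3) (s : Fin (n / 2)) :
    (Gphi n m φ).edist (.inner j t s) (.lit (φ j t).1 (φ j t).2) ≤ (n / 2 - s : ℕ) := by
  let F : ℕ → Vert n m := fun x =>
    if h : x < n / 2 then .inner j t ⟨x, h⟩ else .lit (φ j t).1 (φ j t).2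
  have h := edist_le_of_adj_seq (G := Gphi n m φ) F s.isLt.le fun x hsx hx => by
    by_cases hx' : x + 1 < n / 2
    · simp only [F, dif_pos hx, dif_pos hx']
      exact adj_of_satRel (by simp) ⟨rfl, rfl, rfl⟩
    · simp only [F, dif_pos hx, dif_neg hx']
      exact adj_of_satRel (by simp) ⟨by simp; omega, rfl⟩
  simpa [F, s.isLt] using h

theorem edist_clause_lit_le (hn : 2 ≤ n) (j : Fin m) (t : Fin 3) :
    (Gphi n m φ).edist (.clause j) (.lit (φ j t).1 (φ j t).2) ≤ (n / 2 + 1 : ℕ) := by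
  have hadj : (Gphi n m φ).Adj (.clause j) (.inner j t ⟨0, by omega⟩) :=
    adj_of_satRel (by simp) ⟨rfl, rfl⟩
  have := edist_le_add_of_le (edist_eq_one_iff_adj.2 hadj).le (edist_inner_lit_le j t _)
  rwa [add_comm, Nat.sub_zero] at this

def level (φ : Fin m → Fin 3 → Fin n × Bool) : Vert n m → ℕ
  | .lit i _ => i
  | .chain k => if (k : ℕ) < n then 0 else n - 1
  | .clause j => (φ j 0).1
  | .inner j t _ => (φ j t).1

def depth : Vert n m → ℕ
  | .lit _ _ => 0
  | .chain k => if (k : ℕ) < n then n - k else k + 1 - n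
  | .clause _ => n / 2 + 1
  | .inner _ _ s => n / 2 - s

theorem exists_edist_lit_le_depth (hn : 2 ≤ n) (w : Vert n m) :
    ∃ (i : Fin n) (b : Bool),
      (i : ℕ) = level φ w ∧ (Gphi n m φ).edist w (.lit i b) ≤ depth w := by
  rcases w with ⟨i, b⟩ | k | j | ⟨j, t, s⟩
  · exact ⟨i, b, rfl, by simp [depth]⟩
  · by_cases hk : (k : ℕ) < n
    · refine ⟨⟨0, by omega⟩, true, by simp [level, hk], ?_⟩
      simpa [depth, hk] using edist_chain_lit_le_of_lt (φ := φ) hk true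
    · refine ⟨⟨n - 1, by omega⟩, true, by simp [level, hk], ?_⟩
      simpa [depth, hk] using edist_chain_lit_le_of_le (φ := φ) (not_lt.1 hk) true
  · exact ⟨_, _, rfl, by simpa [depth] using edist_clause_lit_le hn j 0⟩
  · exact ⟨_, _, rfl, by simpa [depth] using edist_inner_lit_le j t s⟩

theorem edist_le_depth_add (hn : 2 ≤ n) (u v : Vert n m) :
    (Gphi n m φ).edist u v ≤
      (depth u + max (level φ u - level φ v + (level φ v - level φ u)) 1 + depth v : ℕ) := by
  obtain ⟨i, b, hi, hu⟩ := exists_edist_lit_le_depth (φ := φ) hn u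
  obtain ⟨i', b', hi', hv⟩ := exists_edist_lit_le_depth (φ := φ) hn v
  rw [SimpleGraph.edist_comm] at hv
  rw [← hi, ← hi']
  exact edist_le_add_of_le (edist_le_add_of_le hu (edist_lit_le i i' b b')) hv

theorem level_lt (w : Vert n m) : level φ w < n := by
  rcases w with ⟨i, b⟩ | k | j | ⟨j, t, s⟩ <;> simp only [level]
  · exact i.isLt
  · have := k.isLt; split_ifs <;> omega
  · exact (φ j 0).1.isLt
  · exact (φ j t).1.isLt

theorem depth_lt_or_eq_end (h4 : 4 ≤ n) (w : Vert n m) :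
    depth w < n ∨ w = .chain ⟨0, by omega⟩ ∨ w = .chain ⟨2 * n - 1, by omega⟩ := by
  rcases w with ⟨i, b⟩ | k | j | ⟨j, t, s⟩ <;>
    simp only [depth, Vert.chain.injEq, Fin.ext_iff]
  · omega
  · have := k.isLt; split_ifs <;> omega
  · omega
  · omega

theorem edist_le_three_mul_sub_one (h4 : 4 ≤ n) (u v : Vert n m) :
    (Gphi n m φ).edist u v ≤ (3 * n - 1 : ℕ) := by
  refine (edist_le_depth_add (by omega) u v).trans (Nat.cast_le.2 ?_)
  have := level_lt (φ := φ) u; have := level_lt (φ := φ) v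
  rcases depth_lt_or_eq_end h4 u with _ | rfl | rfl <;>
    rcases depth_lt_or_eq_end h4 v with _ | rfl | rfl <;>
    simp (disch := omega) only [depth, if_pos, if_neg] at * <;> omega

theorem eq_ends_of_le_dist (h4 : 4 ≤ n) {u v : Vert n m}
    (h : 3 * n - 1 ≤ (Gphi n m φ).dist u v) :
    (u = .chain ⟨0, by omega⟩ ∧ v = .chain ⟨2 * n - 1, by omega⟩) ∨
      (u = .chain ⟨2 * n - 1, by omega⟩ ∧ v = .chain ⟨0, by omega⟩) := by
  have hd := dist_le_of_edist_le (edist_le_depth_add (φ := φ) (by omega) u v)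
  have := level_lt (φ := φ) u; have := level_lt (φ := φ) v
  rcases depth_lt_or_eq_end h4 u with _ | rfl | rfl <;>
    rcases depth_lt_or_eq_end h4 v with _ | rfl | rfl <;>
    simp (disch := omega) only [depth, level, if_pos, if_neg] at * <;>
    first | omega | simp

/-- Lower bounds for the distance from `V₁` and to `V_{2n}`. On a gadget path the minimum compares
leaving through its own literal with going round through the clause vertex. -/
def startPotential (φ : Fin m → Fin 3 → Fin n × Bool) : Vert n m → ℕ
  | .chain k => if (k : ℕ) < n then k else n + k
  | .lit i _ => n + i
  | .clause _ => n + (n / 2 + 1)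
  | .inner j t s => n + min ((φ j t).1 + (n / 2 - s)) (n / 2 + 2 + s)

def endPotential (φ : Fin m → Fin 3 → Fin n × Bool) : Vert n m → ℕ
  | .chain k => if (k : ℕ) < n then 3 * n - 1 - k else 2 * n - 1 - k
  | .lit i _ => 2 * n - 1 - i
  | .clause _ => n + (n / 2 + 1)
  | .inner j t s => n + min (n - 1 - (φ j t).1 + (n / 2 - s)) (n / 2 + 2 + s)

/-- The distance from `C_{j₀}`, truncated at `n/2 + 2`. -/
def clausePotential (φ : Fin m → Fin 3 → Fin n × Bool) (j₀ : Fin m) : Vert n m → ℕ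
  | .chain _ => n / 2 + 2
  | .lit i b => if ∃ t, φ j₀ t = (i, b) then n / 2 + 1 else n / 2 + 2
  | .clause j => if j = j₀ then 0 else n / 2 + 2
  | .inner j _ s => if j = j₀ then s + 1 else n / 2 + 2

theorem startPotential_lipschitz :
    ∀ x y, (Gphi n m φ).Adj x y → startPotential φ y ≤ startPotential φ x + 1 := by
  refine lipschitz_of_satRel ?_
  rintro (⟨i, b⟩ | k | j | ⟨j, t, s⟩) (⟨i', b'⟩ | k' | j' | ⟨j', t', s'⟩) h <;>
    simp only [satRel] at h <;> simp only [startPotential]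
  · rcases h with ⟨rfl, -⟩ | h <;> omega
  · split_ifs <;> omega
  · split_ifs <;> omega
  · have := s'.isLt; omega
  · obtain ⟨hs, hφ⟩ := h; have := (φ j t).1.isLt; simp only [hφ] at this ⊢; omega
  · obtain ⟨rfl, rfl, hs⟩ := h; omega

theorem endPotential_lipschitz :
    ∀ x y, (Gphi n m φ).Adj x y → endPotential φ y ≤ endPotential φ x + 1 := by
  refine lipschitz_of_satRel ?_
  rintro (⟨i, b⟩ | k | j | ⟨j, t, s⟩) (⟨i', b'⟩ | k' | j' | ⟨j', t', s'⟩) h <;>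
    simp only [satRel] at h <;> simp only [endPotential]
  · have := i'.isLt; rcases h with ⟨rfl, -⟩ | h <;> omega
  · have := k.isLt; split_ifs <;> omega
  · have := k'.isLt; split_ifs <;> omega
  · have := s'.isLt; have := (φ j t').1.isLt; omega
  · obtain ⟨hs, hφ⟩ := h; have := (φ j t).1.isLt; simp only [hφ] at this ⊢; omega
  · obtain ⟨rfl, rfl, hs⟩ := h; omega

theorem clausePotential_lipschitz (j₀ : Fin m) :
    ∀ x y, (Gphi n m φ).Adj x y →
      clausePotential φ j₀ y ≤ clausePotential φ j₀ x + 1 := by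
  refine lipschitz_of_satRel ?_
  rintro (⟨i, b⟩ | k | j | ⟨j, t, s⟩) (⟨i', b'⟩ | k' | j' | ⟨j', t', s'⟩) h <;>
    simp only [satRel] at h <;> simp only [clausePotential]
  · split_ifs <;> omega
  · split_ifs <;> omega
  · omega
  · obtain ⟨rfl, hs⟩ := h; split_ifs <;> omega
  · obtain ⟨hs, hφ⟩ := h
    have := s.isLt
    by_cases hj : j = j₀
    · subst hj; rw [if_pos ⟨t, hφ⟩, if_pos rfl]; omega
    · rw [if_neg hj]; split_ifs <;> omega
  · obtain ⟨rfl, rfl, hs⟩ := h; split_ifs <;> omega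

theorem connected (h4 : 4 ≤ n) : (Gphi n m φ).Connected := by
  refine (connected_iff _).2
    ⟨fun u v => edist_ne_top_iff_reachable.1 ?_, ⟨.chain ⟨0, by omega⟩⟩⟩
  exact ne_top_of_le_ne_top (ENat.natCast_ne_top _) (edist_le_three_mul_sub_one h4 u v)

theorem dist_ends (h4 : 4 ≤ n) :
    (Gphi n m φ).dist (.chain ⟨0, by omega⟩) (.chain ⟨2 * n - 1, by omega⟩) =
      3 * n - 1 := by
  refine le_antisymm (dist_le_of_edist_le (edist_le_three_mul_sub_one h4 _ _)) ?_
  have := (connected (φ := φ) h4).preconnected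
    (.chain ⟨0, by omega⟩) (.chain ⟨2 * n - 1, by omega⟩)
    |>.le_add_dist startPotential_lipschitz
  simp only [startPotential, show ¬ 2 * n - 1 < n by omega, show 0 < n by omega, if_true,
    if_false] at this
  omega

theorem diam_eq (h4 : 4 ≤ n) : (Gphi n m φ).diam = 3 * n - 1 := by
  have : Nonempty (Vert n m) := ⟨.chain ⟨0, by omega⟩⟩
  refine le_antisymm ?_ (dist_ends (φ := φ) h4 ▸ dist_le_diam ?_)
  · obtain ⟨u, v, huv⟩ := (Gphi n m φ).exists_dist_eq_diam
    exact huv ▸ dist_le_of_edist_le (edist_le_three_mul_sub_one h4 u v)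
  · exact ne_top_of_le_ne_top (ENat.natCast_ne_top _)
      (ediam_le_of_edist_le (edist_le_three_mul_sub_one h4))

section DiametralPath

variable (h4 : 4 ≤ n)
  (q : (Gphi n m φ).Walk (.chain ⟨0, by omega⟩) (.chain ⟨2 * n - 1, by omega⟩))

theorem potentials_le_of_mem_support (hq : q.length = 3 * n - 1) {w : Vert n m}
    (hw : w ∈ q.support) :
    startPotential φ w ≤ q.support.idxOf w ∧
      endPotential φ w ≤ 3 * n - 1 - q.support.idxOf w := by
  have hs := q.le_add_idxOf_support startPotential_lipschitz hw
  have he := q.le_add_length_sub_idxOf_support endPotential_lipschitz hw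
  have h0 : startPotential φ (.chain ⟨0, by omega⟩ : Vert n m) = 0 := by
    simp [startPotential, show 0 < n by omega]
  have h1 : endPotential φ (.chain ⟨2 * n - 1, by omega⟩ : Vert n m) = 0 := by
    simp [endPotential, show ¬ 2 * n - 1 < n by omega]
  omega

theorem idxOf_support_lit (hq : q.length = 3 * n - 1) {i : Fin n} {b : Bool}
    (h : .lit i b ∈ q.support) :
    q.support.idxOf (.lit i b) = n + i := by
  have := potentials_le_of_mem_support h4 q hq h
  simp only [startPotential, endPotential] at this
  omega

theorem decide_lit_true_mem_support (hq : q.length = 3 * n - 1) {i : Fin n} {b : Bool}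
    (h : .lit i b ∈ q.support) :
    decide (.lit i true ∈ q.support) = b := by
  cases b
  · refine decide_eq_false fun htrue => ?_
    have hf := q.getVert_support_idxOf h
    have ht := q.getVert_support_idxOf htrue
    rw [idxOf_support_lit h4 q hq h] at hf
    rw [idxOf_support_lit h4 q hq htrue] at ht
    cases hf.symm.trans ht
  · exact decide_eq_true h

theorem exists_lit_eq_of_mem_support (hq : q.length = 3 * n - 1) {j : Fin m} {y : Vert n m}
    (hy : y ∈ q.support)
    (hyj : clausePotential φ j y ≤ n / 2 + 1) : ∃ t, y = .lit (φ j t).1 (φ j t).2 := by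
  have hpot := potentials_le_of_mem_support h4 q hq hy
  rcases y with ⟨i, b⟩ | k | j' | ⟨j', t, s⟩ <;>
    simp only [clausePotential, startPotential, endPotential] at hyj hpot
  · split_ifs at hyj with hlit
    · obtain ⟨t, ht⟩ := hlit
      exact ⟨t, by rw [ht]⟩
    · omega
  · omega
  · omega
  · have := (φ j' t).1.isLt
    omega

theorem satisfiable_of_dominating (hq : q.length = 3 * n - 1)
    (hdom : IsKDominating (Gphi n m φ) (n / 2 + 1) q) :
    ∃ A : Fin n → Bool, ∀ j : Fin m, ∃ t : Fin 3, A (φ j t).1 = (φ j t).2 := by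
  refine ⟨fun i => decide (.lit i true ∈ q.support), fun j => ?_⟩
  obtain ⟨y, hy, hdist⟩ := hdom (.clause j)
  have hyj : clausePotential φ j y ≤ n / 2 + 1 := by
    have := (connected (φ := φ) h4).preconnected (.clause j) y
      |>.le_add_dist (clausePotential_lipschitz j)
    have h0 : clausePotential φ j (.clause j) = 0 := by simp [clausePotential]
    omega
  obtain ⟨t, rfl⟩ := exists_lit_eq_of_mem_support h4 q hq hy hyj
  exact ⟨t, decide_lit_true_mem_support h4 q hq hy⟩

end DiametralPath

def assignmentSeq (hn : 0 < n) (A : Fin n → Bool) (k : ℕ) : Vert n m :=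
  if hk : k < n then .chain ⟨k, by omega⟩
  else if hk' : k < 2 * n then .lit ⟨k - n, by omega⟩ (A ⟨k - n, by omega⟩)
  else .chain ⟨min (k - n) (2 * n - 1), by omega⟩

theorem assignmentSeq_adj (hn : 0 < n) (A : Fin n → Bool) {k : ℕ} (hk : k < 3 * n - 1) :
    (Gphi n m φ).Adj (assignmentSeq hn A k) (assignmentSeq hn A (k + 1)) := by
  by_cases h1 : k + 1 < n
  · simp only [assignmentSeq, dif_pos h1, dif_pos (show k < n by omega)]
    exact adj_of_satRel (by simp) ⟨rfl, by simp; omega⟩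
  by_cases h2 : k + 1 = n
  · simp only [assignmentSeq, dif_pos (show k < n by omega), dif_neg h1,
      dif_pos (show k + 1 < 2 * n by omega)]
    exact adj_of_satRel (by simp) (Or.inl ⟨by simp; omega, by simp; omega⟩)
  by_cases h3 : k + 1 < 2 * n
  · simp only [assignmentSeq, dif_neg (show ¬ k < n by omega), dif_neg h1, dif_pos h3,
      dif_pos (show k < 2 * n by omega)]
    exact adj_of_satRel (by simp [Fin.ext_iff]; omega) (Or.inr (by simp; omega))
  by_cases h4 : k + 1 = 2 * n
  · simp only [assignmentSeq, dif_neg (show ¬ k < n by omega), dif_neg h1,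
      dif_pos (show k < 2 * n by omega), dif_neg h3]
    rw [SimpleGraph.adj_comm]
    exact adj_of_satRel (by simp) (Or.inr ⟨by simp; omega, by simp; omega⟩)
  · simp only [assignmentSeq, dif_neg (show ¬ k < n by omega), dif_neg h1,
      dif_neg (show ¬ k < 2 * n by omega), dif_neg h3]
    exact adj_of_satRel (by simp; omega) ⟨by simp; omega, by simp; omega⟩

theorem exists_walk_through_assignment (h4 : 4 ≤ n) (A : Fin n → Bool) :
    ∃ p : (Gphi n m φ).Walk (.chain ⟨0, by omega⟩) (.chain ⟨2 * n - 1, by omega⟩),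
      p.length = 3 * n - 1 ∧ (∀ k, .chain k ∈ p.support) ∧
        ∀ i, .lit i (A i) ∈ p.support := by
  let F := assignmentSeq (m := m) (by omega) A
  obtain ⟨p, hlen, hsupp⟩ :=
    exists_walk_of_adj_seq F (3 * n - 1) fun k hk => assignmentSeq_adj (φ := φ) _ A hk
  have hstart : F 0 = .chain ⟨0, by omega⟩ := by simp [F, assignmentSeq, show 0 < n by omega]
  have hend : F (3 * n - 1) = .chain ⟨2 * n - 1, by omega⟩ := by
    simp [F, assignmentSeq, show ¬ 3 * n - 1 < n by omega, show ¬ 3 * n - 1 < 2 * n by omega]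
    omega
  refine ⟨p.copy hstart hend, by simpa using hlen, fun k => ?_, fun i => ?_⟩ <;>
    rw [Walk.support_copy]
  · by_cases hk : (k : ℕ) < n
    · simpa [F, assignmentSeq, hk] using hsupp k (by omega)
    · convert hsupp (k + n) (by omega) using 1
      simp only [F, assignmentSeq, dif_neg (show ¬ (k : ℕ) + n < n by omega),
        dif_neg (show ¬ (k : ℕ) + n < 2 * n by omega)]
      exact congrArg Vert.chain (Fin.ext (by simp; omega))
  · simpa [F, assignmentSeq, show n + (i : ℕ) < 2 * n by omega] using hsupp (n + i) (by omega)

theorem laminar_of_satisfiable (h4 : 4 ≤ n) {A : Fin n → Bool}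
    (hA : ∀ j : Fin m, ∃ t : Fin 3, A (φ j t).1 = (φ j t).2) :
    KLaminar (Gphi n m φ) (n / 2 + 1) := by
  obtain ⟨p, hlen, hchain, hlit⟩ := exists_walk_through_assignment (φ := φ) h4 A
  refine ⟨_, _, p, ⟨hlen.trans (dist_ends h4).symm, (dist_ends h4).trans (diam_eq h4).symm⟩,
    fun x => ?_⟩
  rcases x with ⟨i, b⟩ | k | j | ⟨j, t, s⟩
  · refine ⟨_, hlit i, dist_le_of_edist_le ((edist_lit_le i i b (A i)).trans ?_)⟩
    simp
  · exact ⟨_, hchain k, by simp⟩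
  · obtain ⟨t, ht⟩ := hA j
    refine ⟨_, hlit (φ j t).1, dist_le_of_edist_le ?_⟩
    simpa [ht] using edist_clause_lit_le (by omega) j t
  · refine ⟨_, hlit (φ j t).1, dist_le_of_edist_le ?_⟩
    have := edist_le_add_of_le (edist_inner_lit_le j t s)
      (edist_lit_le (φ := φ) _ (φ j t).1 _ (A (φ j t).1))
    exact this.trans (by simp)

end Gphi

theorem Gphi_laminar_iff_satisfiable_general (n m : ℕ) (h4 : 4 ≤ n)
    (φ : Fin m → Fin 3 → Fin n × Bool) :
    KLaminar (Gphi n m φ) (n / 2 + 1) ↔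
      ∃ A : Fin n → Bool, ∀ j : Fin m, ∃ t : Fin 3, A (φ j t).1 = (φ j t).2 := by
  refine ⟨fun ⟨u, v, p, ⟨hlen, hdiam⟩, hdom⟩ => ?_,
    fun ⟨A, hA⟩ => Gphi.laminar_of_satisfiable h4 hA⟩
  rw [Gphi.diam_eq h4] at hdiam
  rcases Gphi.eq_ends_of_le_dist h4 hdiam.ge with ⟨hu, hv⟩ | ⟨hu, hv⟩
  · exact Gphi.satisfiable_of_dominating h4 (p.copy hu hv) (by simp [hlen, hdiam])
      fun x => by simpa using hdom x
  · exact Gphi.satisfiable_of_dominating h4 (p.reverse.copy hv hu) (by simp [hlen, hdiam])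
      fun x => by simpa using hdom x

/-- For every 3SAT formula `φ` on `n` boolean variables (`n` even, `n ≥ 4`), the graph `G(φ)`
is `(n/2 + 1)`-laminar if and only if `φ` is satisfiable, i.e. iff there is a truth assignment
`A` of the variables such that every clause contains a literal `(i, b)` with `A i = b`. -/
theorem Gphi_laminar_iff_satisfiable (n m : ℕ) (hn : Even n) (h4 : 4 ≤ n)
    (φ : Fin m → Fin 3 → Fin n × Bool) :
    KLaminar (Gphi n m φ) (n / 2 + 1) ↔
      ∃ A : Fin n → Bool, ∀ j : Fin m, ∃ t : Fin 3, A (φ j t).1 = (φ j t).2 :=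
  Gphi_laminar_iff_satisfiable_general n m h4 φ
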